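/- Let y_1 < y_2 and let π : ℝ → ℝ be measurable and nonnegative. Then the GEV posterior normalizing constant for n = 2 satisfies the exact identity K_2(π; y) = (1/2)(y_2 − y_1)^{−1} ∫_ℝ π(ξ) dξ (as an identity in [0,∞]). -/

import Mathlib

open MeasureTheory Real Set
open scoped ENNReal Classical

/-- The GEV posterior integrand for data `y`, at parameters `(μ, σ, ξ)`:
`σ^{-(n+1)} ∏_i (1 + ξ(y_i - μ)/σ)^{-(1+1/ξ)} exp(-Σ_i (1 + ξ(y_i - μ)/σ)^{-1/ξ})`
on the set where `1 + ξ(y_i - μ)/σ > 0` for all `i` (and `0` otherwise), with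
the Gumbel interpretation
`σ^{-(n+1)} exp(-Σ_i (y_i - μ)/σ) exp(-Σ_i exp(-(y_i - μ)/σ))` when `ξ = 0`. -/
noncomputable def gevDens (n : ℕ) (y : Fin n → ℝ) (μ σ ξ : ℝ) : ℝ :=
  if ξ = 0 then
    σ ^ (-((n : ℝ) + 1)) * Real.exp (-∑ i, (y i - μ) / σ) *
      Real.exp (-∑ i, Real.exp (-((y i - μ) / σ)))
  else if ∀ i, 0 < 1 + ξ * (y i - μ) / σ then
    σ ^ (-((n : ℝ) + 1)) * (∏ i, (1 + ξ * (y i - μ) / σ) ^ (-(1 + 1 / ξ))) *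
      Real.exp (-∑ i, (1 + ξ * (y i - μ) / σ) ^ (-1 / ξ))
  else 0

/-- The GEV posterior normalizing constant `K_n(π; y)` arising from a
GEV(μ, σ, ξ) likelihood for `y_1, …, y_n` and the prior `π(μ,σ,ξ) ∝ π(ξ)/σ`. -/
noncomputable def gevK (n : ℕ) (y : Fin n → ℝ) (p : ℝ → ℝ) : ℝ≥0∞ :=
  ∫⁻ ξ : ℝ, ENNReal.ofReal (p ξ) *
    ∫⁻ μ : ℝ, ∫⁻ σ in Set.Ioi (0 : ℝ), ENNReal.ofReal (gevDens n y μ σ ξ)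

/-!
For `σ > 0` the integrand factorises as `σ⁻³ g((y₀ - μ)/σ) g((y₁ - μ)/σ)`, where `g` is the
standard GEV density of shape `ξ`, a probability density (substitute `t = (1 + ξx)^(-1/ξ)`,
resp. `t = e^(-x)`). For any density `f`, integrating out `μ` leaves `σ⁻² A((y₁ - y₀)/σ)`, with
`A(s) = ∫ f(u) f(u + s) du` the autocorrelation of `f`; the substitution `s = (y₁ - y₀)/σ` turns
the `σ`-integral into `(y₁ - y₀)⁻¹ ∫_{s > 0} A`, and `A` is even with total mass `(∫ f)² = 1`.
So the inner double integral equals `(1/2)(y₁ - y₀)⁻¹` for every `ξ`.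
-/

lemma setLIntegral_Ioi_eq_half_of_even {g : ℝ → ℝ≥0∞} (hg : ∀ s, g (-s) = g s) :
    ∫⁻ s in Ioi 0, g s = (∫⁻ s, g s) / 2 := by
  have hIio : ∫⁻ s in Iio 0, g s = ∫⁻ s in Ioi 0, g s := by
    rw [← lintegral_indicator measurableSet_Iio, ← lintegral_indicator measurableSet_Ioi,
      ← lintegral_neg_eq_self]
    congr with s
    simp [indicator, hg]
  have hsplit := lintegral_add_compl (μ := volume) g (measurableSet_Iio (a := (0 : ℝ)))
  rw [compl_Iio, setLIntegral_congr Ioi_ae_eq_Ici.symm, hIio, ← mul_two] at hsplit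
  rw [← hsplit, ENNReal.mul_div_cancel_right two_ne_zero ENNReal.ofNat_ne_top]

lemma lintegral_comp_mul_left_eq (f : ℝ → ℝ≥0∞) {c : ℝ} (hc : c ≠ 0) :
    ∫⁻ x, f (c * x) = ENNReal.ofReal |c⁻¹| * ∫⁻ x, f x := by
  rw [← smul_eq_mul, ← lintegral_smul_measure, ← Real.map_volume_mul_left hc]
  exact (lintegral_map_equiv f (MeasurableEquiv.mulLeft₀ c hc)).symm

lemma setLIntegral_Ioi_comp_div (g : ℝ → ℝ≥0∞) {d : ℝ} (hd : 0 < d) :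
    ∫⁻ σ in Ioi 0, ENNReal.ofReal (σ ^ 2)⁻¹ * g (d / σ) =
      ENNReal.ofReal d⁻¹ * ∫⁻ s in Ioi 0, g s := by
  have himage : (d / ·) '' Ioi (0 : ℝ) = Ioi 0 := by
    ext s
    refine ⟨?_, fun hs => ⟨d / s, div_pos hd hs, div_div_cancel₀ hd.ne'⟩⟩
    rintro ⟨σ, hσ, rfl⟩
    exact div_pos hd hσ
  have hderiv (σ : ℝ) (hσ : σ ∈ Ioi 0) :
      HasDerivWithinAt (d / ·) (-(d / σ ^ 2)) (Ioi 0) σ := by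
    simpa [div_eq_mul_inv] using ((hasDerivAt_inv hσ.ne').const_mul d).hasDerivWithinAt
  have hinj : InjOn (d / ·) (Ioi (0 : ℝ)) := fun σ _ τ _ h => by
    simpa [div_div_cancel₀ hd.ne'] using congrArg (d / ·) h
  conv_rhs =>
    rw [← himage, lintegral_image_eq_lintegral_abs_deriv_mul measurableSet_Ioi hderiv hinj,
      ← lintegral_const_mul' _ _ ENNReal.ofReal_ne_top]
  refine setLIntegral_congr_fun measurableSet_Ioi fun σ (hσ : 0 < σ) => ?_
  rw [abs_neg, ← mul_assoc, ← ENNReal.ofReal_mul (inv_nonneg.2 hd.le),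
    abs_of_pos (by positivity)]
  congr 2
  field_simp

noncomputable def autocorr (f : ℝ → ℝ≥0∞) (s : ℝ) : ℝ≥0∞ :=
  ∫⁻ u, f u * f (u + s)

lemma autocorr_neg (f : ℝ → ℝ≥0∞) (s : ℝ) : autocorr f (-s) = autocorr f s := by
  rw [autocorr, ← lintegral_add_right_eq_self _ s]
  simp only [add_neg_cancel_right]
  exact lintegral_congr fun u => mul_comm _ _

lemma lintegral_autocorr {f : ℝ → ℝ≥0∞} (hf : Measurable f) :
    ∫⁻ s, autocorr f s = (∫⁻ x, f x) ^ 2 := by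
  unfold autocorr
  rw [lintegral_lintegral_swap (by fun_prop)]
  have inner (u : ℝ) : ∫⁻ s, f u * f (u + s) = f u * ∫⁻ x, f x := by
    rw [lintegral_const_mul _ (by fun_prop), lintegral_add_left_eq_self f u]
  simp_rw [inner]
  rw [lintegral_mul_const _ hf, sq]

lemma lintegral_comp_div_mul_comp_div (f : ℝ → ℝ≥0∞) (a b : ℝ) {σ : ℝ} (hσ : 0 < σ) :
    ∫⁻ μ, f ((a - μ) / σ) * f ((b - μ) / σ) =
      ENNReal.ofReal σ * autocorr f ((b - a) / σ) := by
  let G x := f x * f (x + (b - a) / σ)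
  have hG (μ : ℝ) : f ((a - μ) / σ) * f ((b - μ) / σ) = G (σ⁻¹ * (a - μ)) := by
    simp only [G]
    congr 2 <;> field_simp
    ring
  simp_rw [hG]
  rw [lintegral_sub_left_eq_self (fun x => G (σ⁻¹ * x)) a,
    lintegral_comp_mul_left_eq G (inv_ne_zero hσ.ne'), inv_inv, abs_of_pos hσ]
  rfl

theorem lintegral_locationScale_two {f : ℝ → ℝ≥0∞} (hf : Measurable f) {a b : ℝ}
    (hab : a < b) :
    ∫⁻ μ, ∫⁻ σ in Ioi 0, ENNReal.ofReal (σ ^ 3)⁻¹ * (f ((a - μ) / σ) * f ((b - μ) / σ)) =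
      ENNReal.ofReal (b - a)⁻¹ * ((∫⁻ x, f x) ^ 2 / 2) := by
  rw [lintegral_lintegral_swap (by fun_prop)]
  have hμ (σ : ℝ) (hσ : 0 < σ) :
      ∫⁻ μ, ENNReal.ofReal (σ ^ 3)⁻¹ * (f ((a - μ) / σ) * f ((b - μ) / σ)) =
        ENNReal.ofReal (σ ^ 2)⁻¹ * autocorr f ((b - a) / σ) := by
    rw [lintegral_const_mul' _ _ ENNReal.ofReal_ne_top, lintegral_comp_div_mul_comp_div f a b hσ,
      ← mul_assoc, ← ENNReal.ofReal_mul (by positivity)]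
    congr 2
    field_simp
  rw [setLIntegral_congr_fun measurableSet_Ioi hμ, setLIntegral_Ioi_comp_div _ (sub_pos.2 hab),
    setLIntegral_Ioi_eq_half_of_even (autocorr_neg f), lintegral_autocorr hf]

noncomputable def gevStdDens (ξ x : ℝ) : ℝ :=
  if ξ = 0 then Real.exp (-x) * Real.exp (-Real.exp (-x))
  else if 0 < 1 + ξ * x then
    (1 + ξ * x) ^ (-(1 + 1 / ξ)) * Real.exp (-(1 + ξ * x) ^ (-1 / ξ))
  else 0

lemma gevStdDens_nonneg (ξ x : ℝ) : 0 ≤ gevStdDens ξ x := by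
  unfold gevStdDens; split_ifs <;> positivity

lemma measurable_gevStdDens (ξ : ℝ) : Measurable (gevStdDens ξ) := by
  unfold gevStdDens
  split_ifs
  · fun_prop
  · exact Measurable.ite (measurableSet_lt measurable_const (by fun_prop)) (by fun_prop)
      measurable_const

lemma lintegral_ofReal_exp_neg_Ioi :
    ∫⁻ t in Ioi (0 : ℝ), ENNReal.ofReal (Real.exp (-t)) = 1 := by
  rw [← ofReal_integral_eq_lintegral_ofReal (integrableOn_exp_neg_Ioi 0)
    (.of_forall fun t => (Real.exp_pos _).le), integral_exp_neg_Ioi_zero, ENNReal.ofReal_one]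

lemma lintegral_eq_one_of_comp_eq_exp_neg {g : ℝ → ℝ≥0∞} {φ φ' : ℝ → ℝ}
    (hφ : ∀ t ∈ Ioi 0, HasDerivWithinAt φ (φ' t) (Ioi 0) t) (hinj : InjOn φ (Ioi 0))
    (hsupp : g.support ⊆ φ '' Ioi 0)
    (hg : ∀ t ∈ Ioi (0 : ℝ),
      ENNReal.ofReal |φ' t| * g (φ t) = ENNReal.ofReal (Real.exp (-t))) :
    ∫⁻ x, g x = 1 := by
  rw [← setLIntegral_eq_of_support_subset hsupp,
    lintegral_image_eq_lintegral_abs_deriv_mul measurableSet_Ioi hφ hinj,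
    setLIntegral_congr_fun measurableSet_Ioi hg, lintegral_ofReal_exp_neg_Ioi]

lemma lintegral_gevStdDens_zero : ∫⁻ x, ENNReal.ofReal (gevStdDens 0 x) = 1 := by
  refine lintegral_eq_one_of_comp_eq_exp_neg (φ := fun t => -Real.log t) (φ' := fun t => -t⁻¹)
    (fun t ht => (Real.hasDerivAt_log (ne_of_gt ht)).neg.hasDerivWithinAt) ?_ ?_ ?_
  · intro s hs t ht hst
    exact Real.log_injOn_pos hs ht (neg_injective hst)
  · intro x _
    exact ⟨Real.exp (-x), Real.exp_pos _, by simp⟩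
  · intro t (ht : 0 < t)
    rw [gevStdDens, if_pos rfl, neg_neg, Real.exp_log ht, abs_neg, abs_of_pos (inv_pos.2 ht),
      ← ENNReal.ofReal_mul (inv_nonneg.2 ht.le), ← mul_assoc, inv_mul_cancel₀ ht.ne', one_mul]

lemma lintegral_gevStdDens_of_ne_zero {ξ : ℝ} (hξ : ξ ≠ 0) :
    ∫⁻ x, ENNReal.ofReal (gevStdDens ξ x) = 1 := by
  -- `φ t` solves `(1 + ξ x) ^ (-1 / ξ) = t` for `x`.
  set φ : ℝ → ℝ := fun t => (t ^ (-ξ) - 1) / ξ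
  have hφ (t : ℝ) : 1 + ξ * φ t = t ^ (-ξ) := by
    simp only [φ]; field_simp; ring
  refine lintegral_eq_one_of_comp_eq_exp_neg (φ := φ) (φ' := fun t => -t ^ (-ξ - 1))
    (fun t ht => ?_) ?_ ?_ ?_
  · rw [show -t ^ (-ξ - 1) = -ξ * t ^ (-ξ - 1) / ξ by field_simp]
    exact (((Real.hasDerivAt_rpow_const (Or.inl (ne_of_gt ht))).sub_const 1).div_const
      ξ).hasDerivWithinAt
  · intro s (hs : 0 < s) t (ht : 0 < t) hst
    have : s ^ (-ξ) = t ^ (-ξ) := by rw [← hφ, ← hφ, hst]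
    exact Real.rpow_left_injOn (neg_ne_zero.2 hξ) hs.le ht.le this
  · intro x hx
    have hpos : 0 < 1 + ξ * x := by
      by_contra h
      simp [gevStdDens, hξ, h] at hx
    refine ⟨(1 + ξ * x) ^ (-1 / ξ), Real.rpow_pos_of_pos hpos _, ?_⟩
    have : 1 + ξ * φ ((1 + ξ * x) ^ (-1 / ξ)) = 1 + ξ * x := by
      rw [hφ, ← Real.rpow_mul hpos.le, show -1 / ξ * -ξ = 1 by field_simp, Real.rpow_one]
    exact mul_left_cancel₀ hξ (add_left_cancel this)
  · intro t (ht : 0 < t)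
    have hdens : gevStdDens ξ (φ t) = t ^ (ξ + 1) * Real.exp (-t) := by
      rw [gevStdDens, if_neg hξ, hφ, if_pos (Real.rpow_pos_of_pos ht _), ← Real.rpow_mul ht.le,
        ← Real.rpow_mul ht.le, show -ξ * -(1 + 1 / ξ) = ξ + 1 by field_simp,
        show -ξ * (-1 / ξ) = 1 by field_simp, Real.rpow_one]
    rw [hdens, abs_neg, abs_of_pos (Real.rpow_pos_of_pos ht _),
      ← ENNReal.ofReal_mul (by positivity), ← mul_assoc, ← Real.rpow_add ht]
    simp

lemma lintegral_gevStdDens (ξ : ℝ) : ∫⁻ x, ENNReal.ofReal (gevStdDens ξ x) = 1 := by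
  rcases eq_or_ne ξ 0 with rfl | hξ
  · exact lintegral_gevStdDens_zero
  · exact lintegral_gevStdDens_of_ne_zero hξ

lemma gevDens_two_eq (y : Fin 2 → ℝ) (μ : ℝ) {σ : ℝ} (hσ : 0 < σ) (ξ : ℝ) :
    gevDens 2 y μ σ ξ =
      (σ ^ 3)⁻¹ * (gevStdDens ξ ((y 0 - μ) / σ) * gevStdDens ξ ((y 1 - μ) / σ)) := by
  have hσ3 : σ ^ (-(((2 : ℕ) : ℝ) + 1)) = (σ ^ 3)⁻¹ := by
    rw [Real.rpow_neg hσ.le]; norm_num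
  rw [gevDens, hσ3]
  simp only [gevStdDens, Fin.sum_univ_two, Fin.prod_univ_two, Fin.forall_fin_two,
    mul_div_assoc, neg_add, Real.exp_add]
  split_ifs <;> first | ring1 | (exfalso; tauto)

theorem gev_K2_eq (y : Fin 2 → ℝ) (hy : y 0 < y 1) (p : ℝ → ℝ) :
    gevK 2 y p = ENNReal.ofReal ((1 / 2) * (y 1 - y 0)⁻¹) *
      ∫⁻ ξ : ℝ, ENNReal.ofReal (p ξ) := by
  have hinner (ξ : ℝ) :
      ∫⁻ μ, ∫⁻ σ in Ioi 0, ENNReal.ofReal (gevDens 2 y μ σ ξ) =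
        ENNReal.ofReal ((1 / 2) * (y 1 - y 0)⁻¹) := by
    calc ∫⁻ μ, ∫⁻ σ in Ioi 0, ENNReal.ofReal (gevDens 2 y μ σ ξ)
        = ∫⁻ μ, ∫⁻ σ in Ioi 0, ENNReal.ofReal (σ ^ 3)⁻¹ *
            (ENNReal.ofReal (gevStdDens ξ ((y 0 - μ) / σ)) *
              ENNReal.ofReal (gevStdDens ξ ((y 1 - μ) / σ))) := by
          refine lintegral_congr fun μ => setLIntegral_congr_fun measurableSet_Ioi
            fun σ (hσ : 0 < σ) => ?_
          rw [gevDens_two_eq y μ hσ, ENNReal.ofReal_mul (by positivity),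
            ENNReal.ofReal_mul (gevStdDens_nonneg _ _)]
      _ = ENNReal.ofReal (y 1 - y 0)⁻¹ * ((∫⁻ x, ENNReal.ofReal (gevStdDens ξ x)) ^ 2 / 2) :=
          lintegral_locationScale_two (measurable_gevStdDens ξ).ennreal_ofReal hy
      _ = ENNReal.ofReal ((1 / 2) * (y 1 - y 0)⁻¹) := by
          rw [lintegral_gevStdDens, ENNReal.ofReal_mul (by norm_num),
            ENNReal.ofReal_div_of_pos two_pos, ENNReal.ofReal_one, ENNReal.ofReal_ofNat, one_pow,
            mul_comm]
  simp_rw [gevK, hinner, mul_comm (ENNReal.ofReal (p _))]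
  exact lintegral_const_mul' _ _ ENNReal.ofReal_ne_top
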